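/- Let (C, F) be a pointed connected atomic site and (A, a) a Galois pair. Let C_A be the full subcategory of C on those objects X for which the evaluation ev_a : Hom(A, X) → F X, h ↦ F(h)(a), is a bijection. Then the pair (C_A, F restricted to C_A) again satisfies conditions (i)–(iv) of a pointed connected atomic site, and the evaluation maps ev_a assemble into a natural isomorphism between Hom(A, −) restricted to C_A and F restricted to C_A; in particular the restricted functor is representable by A (which belongs to C_A). -/

import Mathlib

open CategoryTheory Opposite

universe u v

/-- A pointed connected atomic site: a small category `C` together with a
set-valued functor `F` such that (i) every morphism is a strict epimorphism,
(ii) every `F X` is nonempty, (iii) `F` sends morphisms to surjections, and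
(iv) the category of elements of `F` is cofiltered. -/
structure IsPCAS {C : Type u} [Category.{v} C] (F : C ⥤ Type v) : Prop where
  strict_epi : ∀ {Y X Z : C} (f : Y ⟶ X) (g : Y ⟶ Z),
    (∀ {W : C} (p q : W ⟶ Y), p ≫ f = q ≫ f → p ≫ g = q ≫ g) →
    ∃! u : X ⟶ Z, f ≫ u = g
  nonempty : ∀ X : C, Nonempty (F.obj X)
  surjective : ∀ {X Y : C} (f : X ⟶ Y), Function.Surjective (F.map f)
  cofiltered : IsCofiltered F.Elements

/-- The property defining the full subcategory `C_A`: the evaluation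
`Hom(A, X) → F X`, `h ↦ F(h)(a)`, is a bijection. -/
def splitByA {C : Type u} [Category.{v} C] (F : C ⥤ Type v)
    (A : C) (a : F.obj A) : C → Prop :=
  fun X => Function.Bijective (fun h : A ⟶ X => F.map h a)

/-!
Every morphism of a pointed connected atomic site is epi, and cofilteredness of the category of
elements then shows that two parallel morphisms agreeing on a single element are equal. Hence
whether `p ≫ f = q ≫ f` depends only on the elements `F p w`, `F q w` of `F Y`; on an object of
`C_A` these are the images of `a` under morphisms out of `A`, so testing coequalization against
`A` alone suffices, which makes strict epimorphisms of `C` restrict to `C_A`. On `C_A` the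
evaluations at `a` are bijective by definition and natural, so they corepresent `F|_{C_A}`
by `A`; then `(A, a)` is initial in the category of elements, which is therefore cofiltered.
-/

namespace IsPCAS

variable {C : Type u} [Category.{v} C] {F : C ⥤ Type v}

lemma epi (hF : IsPCAS F) {X Y : C} (f : X ⟶ Y) : Epi f where
  left_cancellation x y h := by
    obtain ⟨_, -, huniq⟩ := hF.strict_epi f (f ≫ x) fun p q hpq => by
      rw [← Category.assoc, hpq, Category.assoc]
    exact (huniq x rfl).trans (huniq y h.symm).symm

lemma eq_of_map_apply_eq (hF : IsPCAS F) {W Z : C} {p q : W ⟶ Z} {w : F.obj W}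
    (h : F.map p w = F.map q w) : p = q := by
  have := hF.cofiltered
  obtain ⟨_, c, hc⟩ := IsCofilteredOrEmpty.cone_maps
    (CategoryOfElements.homMk (F.elementsMk W w) (F.elementsMk Z (F.map p w)) p rfl)
    (CategoryOfElements.homMk _ _ q h.symm)
  have := hF.epi c.1
  exact (cancel_epi c.1).1 (congrArg Subtype.val hc)

lemma comp_eq_comp_iff (hF : IsPCAS F) {W Y X : C} (p q : W ⟶ Y) (f : Y ⟶ X) (w : F.obj W) :
    p ≫ f = q ≫ f ↔ F.map f (F.map p w) = F.map f (F.map q w) := by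
  simp only [← Functor.map_comp_apply]
  exact ⟨fun h => h ▸ rfl, hF.eq_of_map_apply_eq⟩

lemma comp_eq_comp_of_surjective (hF : IsPCAS F) {A Y X Z : C} {a : F.obj A}
    (hY : Function.Surjective fun h : A ⟶ Y => F.map h a) {f : Y ⟶ X} {g : Y ⟶ Z}
    (hfg : ∀ h₁ h₂ : A ⟶ Y, h₁ ≫ f = h₂ ≫ f → h₁ ≫ g = h₂ ≫ g)
    {W : C} (p q : W ⟶ Y) (hpq : p ≫ f = q ≫ f) : p ≫ g = q ≫ g := by
  obtain ⟨w⟩ := hF.nonempty W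
  obtain ⟨h₁, hp⟩ := hY (F.map p w)
  obtain ⟨h₂, hq⟩ := hY (F.map q w)
  rw [hF.comp_eq_comp_iff _ _ _ w, ← hp, ← hq, ← hF.comp_eq_comp_iff] at hpq ⊢
  exact hfg _ _ hpq

end IsPCAS

section SplitByA

variable {C : Type u} [Category.{v} C] {F : C ⥤ Type v} {A : C} {a : F.obj A}

noncomputable def corepresentableBySplitByA (hA : splitByA F A a A) :
    (ObjectProperty.ι (splitByA F A a) ⋙ F).CorepresentableBy ⟨A, hA⟩ where
  homEquiv {X} := (ObjectProperty.fullyFaithfulι _).homEquiv.trans (.ofBijective _ X.property)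
  homEquiv_comp _ _ := Functor.map_comp_apply F _ _ a

lemma IsPCAS.restrict_splitByA (hF : IsPCAS F) (hA : splitByA F A a A) :
    IsPCAS (ObjectProperty.ι (splitByA F A a) ⋙ F) where
  strict_epi {Y X Z} f g hfg := by
    obtain ⟨u, hu, huniq⟩ := hF.strict_epi f.hom g.hom <|
      hF.comp_eq_comp_of_surjective Y.property.2 fun h₁ h₂ h =>
        congrArg (·.hom) (hfg (W := ⟨A, hA⟩) (ObjectProperty.homMk h₁) (ObjectProperty.homMk h₂)
          (ObjectProperty.hom_ext _ h))
    exact ⟨ObjectProperty.homMk u, ObjectProperty.hom_ext _ hu,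
      fun v hv => ObjectProperty.hom_ext _ (huniq v.hom (congrArg (·.hom) hv))⟩
  nonempty X := hF.nonempty X.obj
  surjective f := hF.surjective f.hom
  cofiltered := IsCofiltered.of_isInitial _
    (Functor.Elements.isInitialOfCorepresentableBy (corepresentableBySplitByA hA))

end SplitByA

/-- For a pointed connected atomic site `(C, F)` and a Galois pair `(A, a)`,
the full subcategory `C_A` of objects split by `(A, a)`, with `F` restricted
to it, is again a pointed connected atomic site, `A` belongs to `C_A`, and the
evaluation maps at `a` assemble into a natural isomorphism
`Hom(A, −)|_{C_A} ≅ F|_{C_A}`, so the restricted functor is representable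
by `A`. -/
theorem stmt15 {C : Type u} [Category.{v} C] (F : C ⥤ Type v)
    (hF : IsPCAS F) (A : C) (a : F.obj A)
    (hGal : Function.Bijective (fun h : A ⟶ A => F.map h a)) :
    -- `A` belongs to `C_A`
    splitByA F A a A ∧
    -- `(C_A, F|_{C_A})` satisfies conditions (i)-(iv)
    IsPCAS (ObjectProperty.ι (splitByA F A a) ⋙ F) ∧
    -- the evaluations assemble into a natural isomorphism exhibiting
    -- representability of the restriction by `A`
    ∃ θ : coyoneda.obj (op (⟨A, hGal⟩ : ObjectProperty.FullSubcategory (splitByA F A a))) ≅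
        ObjectProperty.ι (splitByA F A a) ⋙ F,
      ∀ (X : ObjectProperty.FullSubcategory (splitByA F A a))
        (h : (⟨A, hGal⟩ : ObjectProperty.FullSubcategory (splitByA F A a)) ⟶ X),
        θ.hom.app X h =
          F.map ((ObjectProperty.ι (splitByA F A a)).map h) a :=
  ⟨hGal, hF.restrict_splitByA hGal, (corepresentableBySplitByA hGal).toIso, fun _ _ => rfl⟩
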